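/- The assignment f ↦ X_f is an anti-morphism from the odd Lie algebra given by the odd Jacobi bracket to the graded Lie algebra of vector fields: for all homogeneous f, g ∈ A and all h ∈ A, X_f(X_g(h)) - (-1)^{(|f|+1)(|g|+1)} X_g(X_f(h)) = -X_{[f,g]_J}(h), i.e. [X_f, X_g] = -X_{[f,g]_J}. -/
import Mathlib


noncomputable section

/-- The sign `(-1)^i` for a parity `i : ZMod 2`. -/
def zsign (i : ZMod 2) : ℝ := if i = 0 then 1 else -1

/-- A Poisson superalgebra: a unital associative `ℝ`-algebra `P` with a `ℤ/2`-grading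
`P = P₀ ⊕ P₁` which is graded-commutative, equipped with an `ℝ`-bilinear, parity-preserving
bracket satisfying graded antisymmetry, the graded Leibniz rule and the graded Jacobi
identity (for homogeneous elements). -/
structure PoissonSuperalgebra (P : Type*) [Ring P] [Algebra ℝ P] where
  grade : ZMod 2 → Submodule ℝ P
  sup_grade : grade 0 ⊔ grade 1 = ⊤
  inf_grade : grade 0 ⊓ grade 1 = ⊥
  one_mem : (1 : P) ∈ grade 0
  mul_mem : ∀ {i j : ZMod 2} {a b : P}, a ∈ grade i → b ∈ grade j → a * b ∈ grade (i + j)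
  super_comm : ∀ {i j : ZMod 2} {a b : P}, a ∈ grade i → b ∈ grade j →
    a * b = zsign (i * j) • (b * a)
  bracket : P →ₗ[ℝ] P →ₗ[ℝ] P
  bracket_mem : ∀ {i j : ZMod 2} {a b : P}, a ∈ grade i → b ∈ grade j →
    bracket a b ∈ grade (i + j)
  bracket_antisymm : ∀ {i j : ZMod 2} {a b : P}, a ∈ grade i → b ∈ grade j →
    bracket a b = -(zsign (i * j) • bracket b a)
  bracket_leibniz : ∀ {i j k : ZMod 2} {a b c : P}, a ∈ grade i → b ∈ grade j →
    c ∈ grade k → bracket a (b * c) = bracket a b * c + zsign (i * j) • (b * bracket a c)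
  bracket_jacobi : ∀ {i j k : ZMod 2} {a b c : P}, a ∈ grade i → b ∈ grade j →
    c ∈ grade k →
    bracket a (bracket b c) = bracket (bracket a b) c + zsign (i * j) • bracket b (bracket a c)

variable {P : Type*} [Ring P] [Algebra ℝ P]

lemma zmod2_cases : ∀ a : ZMod 2, a = 0 ∨ a = 1 := by decide

lemma psa_decomp (psa : PoissonSuperalgebra P) (u : P) :
    ∃ u0 u1 : P, u0 ∈ psa.grade 0 ∧ u1 ∈ psa.grade 1 ∧ u = u0 + u1 := by
  have hu : u ∈ psa.grade 0 ⊔ psa.grade 1 := by rw [psa.sup_grade]; trivial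
  obtain ⟨u0, h0, u1, h1, he⟩ := Submodule.mem_sup.mp hu
  exact ⟨u0, u1, h0, h1, he.symm⟩

lemma leibniz' (psa : PoissonSuperalgebra P) {i j : ZMod 2} {a b : P}
    (ha : a ∈ psa.grade i) (hb : b ∈ psa.grade j) (c : P) :
    psa.bracket a (b * c) = psa.bracket a b * c + zsign (i * j) • (b * psa.bracket a c) := by
  obtain ⟨c0, c1, h0, h1, rfl⟩ := psa_decomp psa c
  simp only [mul_add, map_add]
  rw [psa.bracket_leibniz ha hb h0, psa.bracket_leibniz ha hb h1]
  module

lemma jacobi' (psa : PoissonSuperalgebra P) {i j : ZMod 2} {a b : P}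
    (ha : a ∈ psa.grade i) (hb : b ∈ psa.grade j) (c : P) :
    psa.bracket a (psa.bracket b c)
      = psa.bracket (psa.bracket a b) c + zsign (i * j) • psa.bracket b (psa.bracket a c) := by
  obtain ⟨c0, c1, h0, h1, rfl⟩ := psa_decomp psa c
  simp only [map_add]
  rw [psa.bracket_jacobi ha hb h0, psa.bracket_jacobi ha hb h1]
  module

lemma leibniz_left (psa : PoissonSuperalgebra P) {i j k : ZMod 2} {a b c : P}
    (ha : a ∈ psa.grade i) (hb : b ∈ psa.grade j) (hc : c ∈ psa.grade k) :
    psa.bracket (a * b) c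
      = a * psa.bracket b c + zsign (j * k) • (psa.bracket a c * b) := by
  rw [psa.bracket_antisymm (psa.mul_mem ha hb) hc, psa.bracket_leibniz hc ha hb,
    psa.bracket_antisymm hc ha, psa.bracket_antisymm hc hb]
  rcases zmod2_cases i with rfl | rfl <;> rcases zmod2_cases j with rfl | rfl <;>
    rcases zmod2_cases k with rfl | rfl <;>
    simp (config := {decide := true}) only [zsign, if_true, if_false, neg_mul, mul_neg,
      smul_mul_assoc, mul_smul_comm, neg_smul, smul_neg, one_smul, neg_neg] <;>
    module


/-- The odd Jacobi bracket `[f,g]_J` associated to an odd Jacobi structure `(S, Q)`,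
for `f` homogeneous of parity `i`:
`[f,g]_J = (-1)^{|f|+1} {{S,f},g} - (-1)^{|f|+1} {Q, f g}`. -/
def oddJacobiBracket (psa : PoissonSuperalgebra P) (S Q : P) (i : ZMod 2) (f g : P) : P :=
  zsign (i + 1) • psa.bracket (psa.bracket S f) g - zsign (i + 1) • psa.bracket Q (f * g)

/-- The Hamiltonian vector field of a homogeneous `f` of parity `i`, acting on `g`:
`X_f(g) = (-1)^{|f|} [f,g]_J - {Q,f}·g`. -/
def hamiltonianVF (psa : PoissonSuperalgebra P) (S Q : P) (i : ZMod 2) (f g : P) : P :=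
  zsign i • oddJacobiBracket psa S Q i f g - psa.bracket Q f * g

lemma QQ0 (psa : PoissonSuperalgebra P) (Q : P) (hQ : Q ∈ psa.grade 1)
    (hQQ : psa.bracket Q Q = 0) (u : P) : psa.bracket Q (psa.bracket Q u) = 0 := by
  have hj := jacobi' psa hQ hQ u
  rw [hQQ] at hj
  simp (config := {decide := true}) only [zsign, if_true, if_false, map_zero,
    LinearMap.zero_apply, zero_add, neg_smul, one_smul] at hj
  linear_combination (norm := module) ((1:ℝ)/2) • hj

lemma SSf (psa : PoissonSuperalgebra P) (S Q : P) (hS : S ∈ psa.grade 1)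
    (hSS : psa.bracket S S = -((2 : ℝ) • (Q * S))) (u : P) :
    psa.bracket S (psa.bracket S u) = -(psa.bracket (Q * S) u) := by
  have hj := jacobi' psa hS hS u
  rw [hSS] at hj
  simp (config := {decide := true}) only [zsign, if_true, if_false, map_neg, map_smul,
    LinearMap.neg_apply, LinearMap.smul_apply, neg_smul, one_smul] at hj
  linear_combination (norm := module) ((1:ℝ)/2) • hj

lemma QSanti (psa : PoissonSuperalgebra P) (S Q : P) (hS : S ∈ psa.grade 1)
    (hQ : Q ∈ psa.grade 1) (hQS : psa.bracket Q S = 0) (u : P) :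
    psa.bracket Q (psa.bracket S u) = -(psa.bracket S (psa.bracket Q u)) := by
  have hj := jacobi' psa hQ hS u
  rw [hQS] at hj
  simp (config := {decide := true}) only [zsign, if_true, if_false, map_zero,
    LinearMap.zero_apply, zero_add, neg_smul, one_smul] at hj
  linear_combination (norm := module) hj

lemma hamVF_eq (psa : PoissonSuperalgebra P) (S Q : P) (hQ : Q ∈ psa.grade 1)
    {i : ZMod 2} {f : P} (hfi : f ∈ psa.grade i) (u : P) :
    hamiltonianVF psa S Q i f u
      = zsign i • (f * psa.bracket Q u) - psa.bracket (psa.bracket S f) u := by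
  simp only [hamiltonianVF, oddJacobiBracket]
  rw [leibniz' psa hQ hfi u]
  rcases zmod2_cases i with rfl | rfl <;>
    simp (config := {decide := true}) only [zsign, if_true, if_false, neg_smul, one_smul,
      neg_neg] <;>
    module

lemma hamVF_add (psa : PoissonSuperalgebra P) (S Q : P) (i : ZMod 2) (f u v : P) :
    hamiltonianVF psa S Q i f (u + v)
      = hamiltonianVF psa S Q i f u + hamiltonianVF psa S Q i f v := by
  simp only [hamiltonianVF, oddJacobiBracket, mul_add, map_add]
  module

set_option maxHeartbeats 2000000 in
lemma key_homog
    (psa : PoissonSuperalgebra P) (A : Subalgebra ℝ P) (S Q : P)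
    (hA_bracket : ∀ f ∈ A, ∀ g ∈ A, psa.bracket f g = 0)
    (hS : S ∈ psa.grade 1) (hQ : Q ∈ psa.grade 1)
    (hQQ : psa.bracket Q Q = 0) (hQS : psa.bracket Q S = 0)
    (hSS : psa.bracket S S = -((2 : ℝ) • (Q * S)))
    (hQA : ∀ f ∈ A, psa.bracket Q f ∈ A)
    (hSA : ∀ f ∈ A, ∀ g ∈ A, psa.bracket (psa.bracket S f) g ∈ A)
    {i j k : ZMod 2} {f g h : P} (hf : f ∈ A) (hfi : f ∈ psa.grade i)
    (hg : g ∈ A) (hgj : g ∈ psa.grade j) (hh : h ∈ A) (hhk : h ∈ psa.grade k) :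
    hamiltonianVF psa S Q i f (hamiltonianVF psa S Q j g h)
      - zsign ((i + 1) * (j + 1)) •
          hamiltonianVF psa S Q j g (hamiltonianVF psa S Q i f h)
      = -(hamiltonianVF psa S Q (i + j + 1) (oddJacobiBracket psa S Q i f g) h) := by
  -- grade memberships
  have hqf : psa.bracket Q f ∈ psa.grade (1 + i) := psa.bracket_mem hQ hfi
  have hqg : psa.bracket Q g ∈ psa.grade (1 + j) := psa.bracket_mem hQ hgj
  have hqh : psa.bracket Q h ∈ psa.grade (1 + k) := psa.bracket_mem hQ hhk
  have hDf : psa.bracket S f ∈ psa.grade (1 + i) := psa.bracket_mem hS hfi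
  have hDg : psa.bracket S g ∈ psa.grade (1 + j) := psa.bracket_mem hS hgj
  have hDqf : psa.bracket S (psa.bracket Q f) ∈ psa.grade (1 + (1 + i)) :=
    psa.bracket_mem hS hqf
  have hDqg : psa.bracket S (psa.bracket Q g) ∈ psa.grade (1 + (1 + j)) :=
    psa.bracket_mem hS hqg
  have hDfg_mem : psa.bracket (psa.bracket S f) g ∈ psa.grade (1 + i + j) :=
    psa.bracket_mem hDf hgj
  have hDfh : psa.bracket (psa.bracket S f) h ∈ psa.grade (1 + i + k) :=
    psa.bracket_mem hDf hhk
  have hDqfh : psa.bracket (psa.bracket S (psa.bracket Q f)) h ∈ psa.grade (1 + (1 + i) + k) :=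
    psa.bracket_mem hDqf hhk
  -- A memberships and vanishing brackets
  have hqfA : psa.bracket Q f ∈ A := hQA f hf
  have hqgA : psa.bracket Q g ∈ A := hQA g hg
  have hDfgA : psa.bracket (psa.bracket S f) g ∈ A := hSA f hf g hg
  have z1 : psa.bracket (psa.bracket Q g) h = 0 := hA_bracket _ hqgA _ hh
  have z2 : psa.bracket g h = 0 := hA_bracket g hg h hh
  have z3 : psa.bracket f h = 0 := hA_bracket f hf h hh
  have z4 : psa.bracket (psa.bracket (psa.bracket S f) g) h = 0 := hA_bracket _ hDfgA _ hh
  have z5 : psa.bracket (psa.bracket Q f) g = 0 := hA_bracket _ hqfA _ hg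
  -- grade of the odd Jacobi bracket
  have hFgrade : oddJacobiBracket psa S Q i f g ∈ psa.grade (i + j + 1) := by
    have m1 : psa.bracket (psa.bracket S f) g ∈ psa.grade (i + j + 1) := by
      have e : (1 + i + j : ZMod 2) = i + j + 1 := by ring
      exact e ▸ hDfg_mem
    have m2 : psa.bracket Q (f * g) ∈ psa.grade (i + j + 1) := by
      have : psa.bracket Q (f * g) ∈ psa.grade (1 + (i + j)) :=
        psa.bracket_mem hQ (psa.mul_mem hfi hgj)
      have e : (1 + (i + j) : ZMod 2) = i + j + 1 := by ring
      exact e ▸ this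
    exact Submodule.sub_mem _ (Submodule.smul_mem _ _ m1) (Submodule.smul_mem _ _ m2)
  -- expansions
  have e1g : hamiltonianVF psa S Q j g h
      = zsign j • (g * psa.bracket Q h) - psa.bracket (psa.bracket S g) h :=
    hamVF_eq psa S Q hQ hgj h
  have e1f : hamiltonianVF psa S Q i f h
      = zsign i • (f * psa.bracket Q h) - psa.bracket (psa.bracket S f) h :=
    hamVF_eq psa S Q hQ hfi h
  have e2g : psa.bracket Q (hamiltonianVF psa S Q j g h)
      = zsign j • (psa.bracket Q g * psa.bracket Q h)
        + psa.bracket (psa.bracket S (psa.bracket Q g)) h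
        - zsign (1 * (1 + j)) • psa.bracket (psa.bracket S g) (psa.bracket Q h) := by
    rw [e1g, map_sub, map_smul, leibniz' psa hQ hgj (psa.bracket Q h),
      QQ0 psa Q hQ hQQ h, jacobi' psa hQ hDg h, QSanti psa S Q hS hQ hQS g]
    rcases zmod2_cases j with rfl | rfl <;> rcases zmod2_cases k with rfl | rfl <;>
      simp (config := {decide := true}) only [zsign, if_true, if_false, map_neg,
        LinearMap.neg_apply, mul_zero, smul_zero, add_zero, neg_smul, one_smul, neg_neg] <;>
      module
  have e2f : psa.bracket Q (hamiltonianVF psa S Q i f h)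
      = zsign i • (psa.bracket Q f * psa.bracket Q h)
        + psa.bracket (psa.bracket S (psa.bracket Q f)) h
        - zsign (1 * (1 + i)) • psa.bracket (psa.bracket S f) (psa.bracket Q h) := by
    rw [e1f, map_sub, map_smul, leibniz' psa hQ hfi (psa.bracket Q h),
      QQ0 psa Q hQ hQQ h, jacobi' psa hQ hDf h, QSanti psa S Q hS hQ hQS f]
    rcases zmod2_cases i with rfl | rfl <;> rcases zmod2_cases k with rfl | rfl <;>
      simp (config := {decide := true}) only [zsign, if_true, if_false, map_neg,
        LinearMap.neg_apply, mul_zero, smul_zero, add_zero, neg_smul, one_smul, neg_neg] <;>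
      module
  have e3 : psa.bracket (psa.bracket S f) (hamiltonianVF psa S Q j g h)
      = zsign j • (psa.bracket (psa.bracket S f) g * psa.bracket Q h)
        + zsign (j + (1 + i) * j) • (g * psa.bracket (psa.bracket S f) (psa.bracket Q h))
        - psa.bracket (psa.bracket (psa.bracket S f) (psa.bracket S g)) h
        - zsign ((1 + i) * (1 + j)) •
            psa.bracket (psa.bracket S g) (psa.bracket (psa.bracket S f) h) := by
    rw [e1g, map_sub, map_smul, leibniz' psa hDf hgj (psa.bracket Q h),
      jacobi' psa hDf hDg h]
    rcases zmod2_cases i with rfl | rfl <;> rcases zmod2_cases j with rfl | rfl <;>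
      simp (config := {decide := true}) only [zsign, if_true, if_false, neg_smul,
        one_smul, neg_neg] <;>
      module
  have e4 : psa.bracket (psa.bracket S g) (hamiltonianVF psa S Q i f h)
      = zsign i • (psa.bracket (psa.bracket S g) f * psa.bracket Q h)
        + zsign (i + (1 + j) * i) • (f * psa.bracket (psa.bracket S g) (psa.bracket Q h))
        - psa.bracket (psa.bracket S g) (psa.bracket (psa.bracket S f) h) := by
    rw [e1f, map_sub, map_smul, leibniz' psa hDg hfi (psa.bracket Q h)]
    rcases zmod2_cases i with rfl | rfl <;> rcases zmod2_cases j with rfl | rfl <;>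
      simp (config := {decide := true}) only [zsign, if_true, if_false, neg_smul,
        one_smul, neg_neg] <;>
      module
  have e5 : psa.bracket (psa.bracket S g) f
      = zsign (i * j) • psa.bracket (psa.bracket S f) g := by
    have h1 := jacobi' psa hS hgj f
    rw [hA_bracket g hg f hf, map_zero, psa.bracket_antisymm hgj hDf] at h1
    rcases zmod2_cases i with rfl | rfl <;> rcases zmod2_cases j with rfl | rfl <;>
      simp (config := {decide := true}) only [zsign, if_true, if_false, neg_smul,
        one_smul, neg_neg, smul_neg] at h1 ⊢ <;>
      linear_combination (norm := module) (-1 : ℝ) • h1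
  have e6 : oddJacobiBracket psa S Q i f g
      = zsign (i + 1) • psa.bracket (psa.bracket S f) g
        - zsign (i + 1) • (psa.bracket Q f * g) + f * psa.bracket Q g := by
    simp only [oddJacobiBracket]
    rw [leibniz' psa hQ hfi g]
    rcases zmod2_cases i with rfl | rfl <;>
      simp (config := {decide := true}) only [zsign, if_true, if_false, neg_smul,
        one_smul, neg_neg] <;>
      module
  have e7 : psa.bracket S (oddJacobiBracket psa S Q i f g)
      = psa.bracket (psa.bracket S f) (psa.bracket S g)
        + zsign (i * j + i + j) • (psa.bracket Q g * psa.bracket S f)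
        + zsign i • (Q * psa.bracket (psa.bracket S f) g)
        + zsign i • (psa.bracket S (psa.bracket Q f) * g)
        + psa.bracket S f * psa.bracket Q g
        + zsign i • (f * psa.bracket S (psa.bracket Q g)) := by
    rw [e6, map_add, map_sub, map_smul, map_smul,
      leibniz' psa hS hfi (psa.bracket Q g),
      leibniz' psa hS hqf g,
      jacobi' psa hS hDf g,
      SSf psa S Q hS hSS f,
      leibniz_left psa hQ hS hfi]
    simp only [map_neg, map_add, map_smul, LinearMap.neg_apply, LinearMap.add_apply,
      LinearMap.smul_apply]
    rw [leibniz_left psa hQ hDf hgj, leibniz_left psa hqf hS hgj, z5]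
    rcases zmod2_cases i with rfl | rfl <;> rcases zmod2_cases j with rfl | rfl <;>
      simp (config := {decide := true}) only [zsign, if_true, if_false, neg_smul,
        one_smul, neg_neg, zero_mul, smul_zero, add_zero, smul_neg, smul_add, smul_smul,
        neg_add, mul_zero, zero_add] <;>
      module
  have e8 : psa.bracket (psa.bracket S (oddJacobiBracket psa S Q i f g)) h
      = psa.bracket (psa.bracket (psa.bracket S f) (psa.bracket S g)) h
        + zsign (i * j + i + j) • (psa.bracket Q g * psa.bracket (psa.bracket S f) h)
        + zsign (i + (1 + i + j) * k) • (psa.bracket Q h * psa.bracket (psa.bracket S f) g)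
        + zsign (i + j * k) • (psa.bracket (psa.bracket S (psa.bracket Q f)) h * g)
        + zsign ((1 + j) * k) • (psa.bracket (psa.bracket S f) h * psa.bracket Q g)
        + zsign i • (f * psa.bracket (psa.bracket S (psa.bracket Q g)) h) := by
    rw [e7]
    simp only [map_add, map_smul, LinearMap.add_apply, LinearMap.smul_apply]
    rw [leibniz_left psa hqg hDf hhk, leibniz_left psa hQ hDfg_mem hhk,
      leibniz_left psa hDqf hgj hhk, leibniz_left psa hDf hqg hhk,
      leibniz_left psa hfi hDqg hhk, z1, z2, z3, z4]
    rcases zmod2_cases i with rfl | rfl <;> rcases zmod2_cases j with rfl | rfl <;>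
      rcases zmod2_cases k with rfl | rfl <;>
      simp (config := {decide := true}) only [zsign, if_true, if_false, neg_smul,
        one_smul, neg_neg, zero_mul, smul_zero, add_zero, mul_zero, zero_add, smul_neg,
        smul_add, smul_smul] <;>
      module
  -- commutation relations
  have c1 : psa.bracket Q f * g = zsign ((1 + i) * j) • (g * psa.bracket Q f) :=
    psa.super_comm hqf hgj
  have c2 : psa.bracket Q h * psa.bracket (psa.bracket S f) g
      = zsign ((1 + k) * (1 + i + j)) •
          (psa.bracket (psa.bracket S f) g * psa.bracket Q h) :=
    psa.super_comm hqh hDfg_mem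
  have c3 : psa.bracket (psa.bracket S (psa.bracket Q f)) h * g
      = zsign ((1 + (1 + i) + k) * j) •
          (g * psa.bracket (psa.bracket S (psa.bracket Q f)) h) :=
    psa.super_comm hDqfh hgj
  have c4 : psa.bracket (psa.bracket S f) h * psa.bracket Q g
      = zsign ((1 + i + k) * (1 + j)) •
          (psa.bracket Q g * psa.bracket (psa.bracket S f) h) :=
    psa.super_comm hDfh hqg
  -- assembly
  rw [hamVF_eq psa S Q hQ hfi (hamiltonianVF psa S Q j g h),
    hamVF_eq psa S Q hQ hgj (hamiltonianVF psa S Q i f h),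
    hamVF_eq psa S Q hQ hFgrade h,
    e2g, e3, e2f, e4, e8, e6, c1, c2, c3, c4, e5]
  rcases zmod2_cases i with rfl | rfl <;> rcases zmod2_cases j with rfl | rfl <;>
    rcases zmod2_cases k with rfl | rfl <;>
    simp (config := {decide := true}) only [zsign, if_true, if_false, neg_smul, one_smul,
      neg_neg, sub_mul, add_mul, mul_add, mul_sub, smul_mul_assoc, mul_smul_comm,
      smul_add, smul_sub, smul_smul, smul_neg, neg_mul, mul_neg, mul_assoc] <;>
    module

/-- Proposition 2.3: the assignment `f ↦ X_f` is an anti-morphism: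
`[X_f, X_g] = -X_{[f,g]_J}`, explicitly
`X_f(X_g(h)) - (-1)^{(|f|+1)(|g|+1)} X_g(X_f(h)) = -X_{[f,g]_J}(h)`. -/
theorem hamiltonianVF_antimorphism
    (psa : PoissonSuperalgebra P) (A : Subalgebra ℝ P) (S Q : P)
    (hA_graded : ∀ a ∈ A, ∃ a₀ a₁ : P, a₀ ∈ A ∧ a₀ ∈ psa.grade 0 ∧
      a₁ ∈ A ∧ a₁ ∈ psa.grade 1 ∧ a = a₀ + a₁)
    (hA_bracket : ∀ f ∈ A, ∀ g ∈ A, psa.bracket f g = 0)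
    (hS : S ∈ psa.grade 1) (hQ : Q ∈ psa.grade 1)
    (hQQ : psa.bracket Q Q = 0) (hQS : psa.bracket Q S = 0)
    (hSS : psa.bracket S S = -((2 : ℝ) • (Q * S)))
    (hQA : ∀ f ∈ A, psa.bracket Q f ∈ A)
    (hSA : ∀ f ∈ A, ∀ g ∈ A, psa.bracket (psa.bracket S f) g ∈ A)
    {i j : ZMod 2} {f g h : P} (hf : f ∈ A) (hfi : f ∈ psa.grade i)
    (hg : g ∈ A) (hgj : g ∈ psa.grade j) (hh : h ∈ A) :
    hamiltonianVF psa S Q i f (hamiltonianVF psa S Q j g h)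
      - zsign ((i + 1) * (j + 1)) •
          hamiltonianVF psa S Q j g (hamiltonianVF psa S Q i f h)
      = -(hamiltonianVF psa S Q (i + j + 1) (oddJacobiBracket psa S Q i f g) h) := by
  obtain ⟨h0, h1, hh0A, hh0g, hh1A, hh1g, rfl⟩ := hA_graded h hh
  simp only [hamVF_add]
  have K0 := key_homog psa A S Q hA_bracket hS hQ hQQ hQS hSS hQA hSA hf hfi hg hgj hh0A hh0g
  have K1 := key_homog psa A S Q hA_bracket hS hQ hQQ hQS hSS hQA hSA hf hfi hg hgj hh1A hh1g
  linear_combination (norm := module) K0 + K1
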